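/- Let φ : M → N and ψ' : N → P be surjective homomorphisms of finite monoids, H a class of finite groups closed under isomorphism, subgroups, and quotients. If the composite ψ' ∘ φ is an LH-morphism (preimages of idempotents are semigroups whose local monoids are groups in H), then φ is an LH-morphism. -/
import Mathlib


/-- Data exhibiting the local monoid `xTx` (for `x` an idempotent of `T`) as a group
isomorphic to the abstract group `G`: a multiplicative bijection of `G` onto
`{x t x | t ∈ T}` sending `1` to `x`. -/
structure GroupOn {M : Type} [Mul M] (T : Set M) (x : M) (G : Type) [Group G] where
  ι : G → M
  inj : Function.Injective ι
  rng : Set.range ι = {m : M | ∃ t ∈ T, m = x * t * x}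
  map_mul : ∀ a b : G, ι (a * b) = ι a * ι b
  map_one : ι 1 = x

/-- The local monoid `xTx` is a group belonging to the class `H`. -/
def IsLocalGroupIn {M : Type} [Mul M] (H : (G : Type) → [inst : Group G] → Prop)
    (T : Set M) (x : M) : Prop :=
  ∃ (G : Type) (gG : Group G), Nonempty (@GroupOn M _ T x G gG) ∧ @H G gG

/-- let `H` be a class of finite groups closed under isomorphism,
subgroups and quotients (containing the trivial group).  If a composite
`ψ' ∘ φ` of surjective homomorphisms of finite monoids is an LH-morphism
(preimages of idempotents are semigroups all of whose local monoids are groups in `H`),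
then so is `φ`. -/
theorem stmt_19 {M N P : Type} [Monoid M] [Monoid N] [Monoid P]
    [Fintype M] [Fintype N] [Fintype P]
    (H : (G : Type) → [inst : Group G] → Prop)
    (hiso : ∀ (G G' : Type) [Group G] [Group G'], Nonempty (G ≃* G') → H G → H G')
    (hsub : ∀ (G : Type) [Group G] (K : Subgroup G), H G → H K)
    (hquot : ∀ (G : Type) [Group G] (K : Subgroup G) [K.Normal], H G → H (G ⧸ K))
    (htriv : ∀ (G : Type) [Group G], Subsingleton G → H G)
    (φ : M →* N) (ψ' : N →* P)
    (hφ : Function.Surjective φ) (hψ' : Function.Surjective ψ')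
    (hLH : ∀ e : P, e * e = e →
      ∀ x : M, ψ' (φ x) = e → x * x = x →
        IsLocalGroupIn H {m : M | ψ' (φ m) = e} x) :
    ∀ f : N, f * f = f →
      ∀ x : M, φ x = f → x * x = x →
        IsLocalGroupIn H {m : M | φ m = f} x := by
  intro f hf x hx hxx
  obtain ⟨G, gG, ⟨go⟩, hG⟩ :=
    hLH (ψ' f) (by rw [← map_mul, hf]) x (by rw [hx]) hxx
  haveI : Finite G := Finite.of_injective go.ι go.inj
  -- the target local set
  set S' : Set M := {m : M | ∃ t ∈ {m : M | φ m = f}, m = x * t * x} with hS'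
  have hS'mul : ∀ m₁ ∈ S', ∀ m₂ ∈ S', m₁ * m₂ ∈ S' := by
    rintro _ ⟨t₁, ht₁, rfl⟩ _ ⟨t₂, ht₂, rfl⟩
    refine ⟨t₁ * x * x * t₂, ?_, by simp [mul_assoc]⟩
    simp only [Set.mem_setOf_eq, map_mul] at ht₁ ht₂ ⊢
    rw [ht₁, ht₂, hx, hf, hf, hf]
  have hxS' : x ∈ S' := ⟨x, hx, by rw [hxx, hxx]⟩
  have hpow : ∀ (a : G), go.ι a ∈ S' → ∀ n : ℕ, go.ι (a ^ n) ∈ S' := by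
    intro a ha n
    induction n with
    | zero => simpa [go.map_one] using hxS'
    | succ n ih => rw [pow_succ, go.map_mul]; exact hS'mul _ ih _ ha
  let K : Subgroup G :=
    { carrier := go.ι ⁻¹' S'
      mul_mem' := fun {a b} ha hb => by
        simp only [Set.mem_preimage, go.map_mul] at *
        exact hS'mul _ ha _ hb
      one_mem' := by simpa [Set.mem_preimage, go.map_one] using hxS'
      inv_mem' := fun {a} ha => by
        simp only [Set.mem_preimage] at *
        have h1 : a ⁻¹ = a ^ (Nat.card G - 1) := by
          haveI : Nonempty G := ⟨a⟩
          have hc : 1 ≤ Nat.card G := Nat.card_pos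
          refine inv_eq_of_mul_eq_one_right ?_
          rw [← pow_succ', Nat.sub_add_cancel hc]
          exact pow_card_eq_one'
        rw [h1]
        exact hpow a ha _ }
  have hKmem : ∀ a : G, a ∈ K ↔ go.ι a ∈ S' := fun a => Iff.rfl
  refine ⟨K, inferInstance, ⟨⟨fun a => go.ι a, go.inj.comp Subtype.val_injective, ?_,
    fun a b => go.map_mul a b, go.map_one⟩⟩, hsub G K hG⟩
  ext m
  constructor
  · rintro ⟨⟨a, ha⟩, rfl⟩
    exact ha
  · intro hm
    have hm' : m ∈ Set.range go.ι := by
      rw [go.rng]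
      obtain ⟨t, ht, rfl⟩ := hm
      refine ⟨t, ?_, rfl⟩
      simp only [Set.mem_setOf_eq] at ht ⊢
      rw [ht]
    obtain ⟨a, rfl⟩ := hm'
    exact ⟨⟨a, hm⟩, rfl⟩
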